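/- arXiv:1611.06160 — 2 statements merged into one kernel-verified Lean document; each statement's English description precedes it below -/
import Mathlib

section
/- (Polyak's lemma) If nonnegative real sequences {v_k}, {u_k}, {b_k}, {c_k} satisfy Σ_{k=0}^∞ b_k < ∞, Σ_{k=0}^∞ c_k < ∞, and v_{k+1} ≤ (1 + b_k)v_k − u_k + c_k for all k ≥ 0, then {v_k} converges and Σ_{k=0}^∞ u_k < ∞. -/
/-!
Dividing by the partial products `P n = ∏_{j<n} (1 + b j)`, which increase to a finite limit,
turns the recursion into `w (n+1) ≤ w n + c n` for `w n = v n / P n`; then `w n - ∑_{j<n} c j`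
is antitone and bounded below, so `w`, and hence `v = w * P`, converges. Rearranged, the
recursion reads `u k ≤ v k - v (k+1) + b k * v k + c k`, whose partial sums telescope and stay
bounded because the convergent sequence `v` is bounded.
-/

open Filter Finset Topology

theorem exists_tendsto_of_succ_le_add_summable {w c : ℕ → ℝ} (hw : BddBelow (Set.range w))
    (hc : Summable c) (hstep : ∀ n, w (n + 1) ≤ w n + c n) :
    ∃ L, Tendsto w atTop (𝓝 L) := by
  set S : ℕ → ℝ := fun n => ∑ j ∈ range n, c j
  have hS : Tendsto S atTop (𝓝 (∑' j, c j)) := hc.hasSum.tendsto_sum_nat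
  obtain ⟨m, hm⟩ := hw
  obtain ⟨M, hM⟩ := hS.bddAbove_range
  have hanti : Antitone (w - S) := antitone_nat_of_succ_le fun n => by
    simp only [Pi.sub_apply, S, sum_range_succ]
    linarith [hstep n]
  have hbdd : BddBelow (Set.range (w - S)) := by
    refine ⟨m - M, ?_⟩
    rintro _ ⟨n, rfl⟩
    show m - M ≤ w n - S n
    linarith [hm ⟨n, rfl⟩, hM ⟨n, rfl⟩]
  refine ⟨(⨅ n, (w - S) n) + ∑' j, c j, ?_⟩
  simpa using (tendsto_atTop_ciInf hanti hbdd).add hS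

theorem exists_tendsto_of_succ_le_one_add_mul_add {v b c : ℕ → ℝ} (hv : ∀ n, 0 ≤ v n)
    (hb : ∀ n, 0 ≤ b n) (hc : ∀ n, 0 ≤ c n) (hbs : Summable b) (hcs : Summable c)
    (hstep : ∀ n, v (n + 1) ≤ (1 + b n) * v n + c n) :
    ∃ L, Tendsto v atTop (𝓝 L) := by
  set P : ℕ → ℝ := fun n => ∏ j ∈ range n, (1 + b j)
  have hP1 : ∀ n, 1 ≤ P n := fun n => one_le_prod fun j _ => by linarith [hb j]
  have hPpos : ∀ n, 0 < P n := fun n => one_pos.trans_le (hP1 n)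
  have hP : Tendsto P atTop (𝓝 (∏' j, (1 + b j))) :=
    (Real.multipliable_one_add_of_summable hbs).tendsto_prod_tprod_nat
  have hwstep : ∀ n, v (n + 1) / P (n + 1) ≤ v n / P n + c n := fun n => by
    have hPsucc : P (n + 1) = P n * (1 + b n) := prod_range_succ _ n
    have hcP : c n / P (n + 1) ≤ c n := div_le_self (hc n) (hP1 _)
    calc v (n + 1) / P (n + 1) ≤ ((1 + b n) * v n + c n) / P (n + 1) :=
          div_le_div_of_nonneg_right (hstep n) (hPpos _).le
      _ = v n / P n + c n / P (n + 1) := by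
          rw [hPsucc]; field_simp [(hPpos n).ne', (by linarith [hb n] : 1 + b n ≠ 0)]
      _ ≤ v n / P n + c n := by linarith
  obtain ⟨L, hL⟩ := exists_tendsto_of_succ_le_add_summable
    ⟨0, by rintro _ ⟨n, rfl⟩; exact div_nonneg (hv n) (hPpos n).le⟩ hcs hwstep
  refine ⟨L * ∏' j, (1 + b j), (hL.mul hP).congr fun n => ?_⟩
  exact div_mul_cancel₀ _ (hPpos n).ne'

theorem summable_of_le_sub_succ_add {u v e : ℕ → ℝ} (hu : ∀ k, 0 ≤ u k) (hv : ∀ k, 0 ≤ v k)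
    (he : ∀ k, 0 ≤ e k) (hes : Summable e) (hle : ∀ k, u k ≤ v k - v (k + 1) + e k) :
    Summable u := by
  refine summable_of_sum_range_le (c := v 0 + ∑' k, e k) hu fun n => ?_
  calc ∑ k ∈ range n, u k ≤ ∑ k ∈ range n, (v k - v (k + 1) + e k) :=
        sum_le_sum fun k _ => hle k
    _ = v 0 - v n + ∑ k ∈ range n, e k := by rw [sum_add_distrib, sum_range_sub']
    _ ≤ v 0 + ∑' k, e k := by linarith [hv n, hes.sum_le_tsum (range n) fun k _ => he k]

/-- Polyak's lemma: If nonnegative sequences `v, u, b, c` satisfy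
`∑ b_k < ∞`, `∑ c_k < ∞`, and `v_{k+1} ≤ (1 + b_k) v_k − u_k + c_k` for all `k`,
then `v` converges and `∑ u_k < ∞`. -/
theorem stmt3 (v u b c : ℕ → ℝ)
    (hv : ∀ k, 0 ≤ v k) (hu : ∀ k, 0 ≤ u k) (hb : ∀ k, 0 ≤ b k) (hc : ∀ k, 0 ≤ c k)
    (hbs : Summable b) (hcs : Summable c)
    (hrec : ∀ k, v (k + 1) ≤ (1 + b k) * v k - u k + c k) :
    (∃ L : ℝ, Filter.Tendsto v Filter.atTop (nhds L)) ∧ Summable u := by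
  obtain ⟨L, hL⟩ := exists_tendsto_of_succ_le_one_add_mul_add hv hb hc hbs hcs
    fun k => by linarith [hrec k, hu k]
  refine ⟨⟨L, hL⟩, ?_⟩
  obtain ⟨M, hM⟩ := hL.bddAbove_range
  have hbv : Summable fun k => b k * v k :=
    (hbs.mul_right M).of_nonneg_of_le (fun k => mul_nonneg (hb k) (hv k))
      fun k => mul_le_mul_of_nonneg_left (hM ⟨k, rfl⟩) (hb k)
  exact summable_of_le_sub_succ_add hu hv (fun k => add_nonneg (mul_nonneg (hb k) (hv k)) (hc k))
    (hbv.add hcs) fun k => by linarith [hrec k]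
end

section
/- Let f: ℝ → ℝ be differentiable, s-strongly convex, and have l-Lipschitz continuous derivative with 0 < s ≤ l. For step-size 0 < α < 2/l, define x₊ = x − α f′(x). Then |x₊ − x*| ≤ η|x − x*|, where x* is the minimizer of f and η = max(|1 − αl|, |1 − αs|) < 1. -/
set_option maxHeartbeats 1000000


/-- For `f : ℝ → ℝ` differentiable, `s`-strongly convex with `l`-Lipschitz
derivative, `0 < s ≤ l`, and step-size `0 < α < 2/l`, the gradient step
`x₊ = x − α f′(x)` satisfies `|x₊ − x*| ≤ η |x − x*|` with
`η = max |1 − α l| |1 − α s| < 1`, where `x*` is the minimizer of `f`. -/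
theorem stmt5 (f : ℝ → ℝ) (s l α : ℝ) (xstar : ℝ)
    (hdiff : Differentiable ℝ f)
    (hs : 0 < s) (hsl : s ≤ l)
    (hsc : ∀ x y : ℝ, f y ≥ f x + deriv f x * (y - x) + s / 2 * (y - x) ^ 2)
    (hlip : ∀ x y : ℝ, |deriv f x - deriv f y| ≤ l * |x - y|)
    (hα : 0 < α) (hα2 : α < 2 / l)
    (hmin : ∀ y : ℝ, f xstar ≤ f y) :
    ∀ x : ℝ,
      |(x - α * deriv f x) - xstar| ≤ max |1 - α * l| |1 - α * s| * |x - xstar| ∧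
      max |1 - α * l| |1 - α * s| < 1 := by
  have hl : 0 < l := lt_of_lt_of_le hs hsl
  have hαl : α * l < 2 := by
    have h := (lt_div_iff₀ hl).mp hα2
    linarith
  have hαs : 0 < α * s := mul_pos hα hs
  have hαsl : α * s ≤ α * l := by nlinarith
  have hd0 : deriv f xstar = 0 := by
    have hloc : IsLocalMin f xstar := Filter.Eventually.of_forall hmin
    exact hloc.deriv_eq_zero
  have hηlt : max |1 - α * l| |1 - α * s| < 1 := by
    apply max_lt <;> rw [abs_lt] <;> constructor <;> nlinarith
  intro x
  refine ⟨?_, hηlt⟩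
  have hd' : 0 ≤ |x - xstar| := abs_nonneg _
  have hη1 : |1 - α * l| ≤ (max |1 - α * l| |1 - α * s|) := le_max_left _ _
  have hη2 : |1 - α * s| ≤ (max |1 - α * l| |1 - α * s|) := le_max_right _ _
  have hmono : s * (x - xstar) ^ 2 ≤ deriv f x * (x - xstar) := by
    have h1 := hsc x xstar
    have h2 := hsc xstar x
    rw [hd0] at h2
    nlinarith [h1, h2]
  have hg : |deriv f x| ≤ l * |x - xstar| := by
    have h := hlip x xstar
    rwa [hd0, sub_zero] at h
  rw [show x - α * deriv f x - xstar = (x - xstar) - α * deriv f x from by ring]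
  rcases lt_trichotomy (x - xstar) 0 with hd | hd | hd
  · -- d < 0 : l*d ≤ g ≤ s*d
    have habs : |x - xstar| = -(x - xstar) := abs_of_neg hd
    have hglb : l * (x - xstar) ≤ deriv f x := by
      have := neg_abs_le (deriv f x)
      nlinarith
    have hgub : deriv f x ≤ s * (x - xstar) := by nlinarith
    rw [abs_le, habs]
    constructor
    · have hb : (max |1 - α * l| |1 - α * s|) * (x - xstar) ≤ (1 - α * s) * (x - xstar) :=
        mul_le_mul_of_nonpos_right (le_trans (le_abs_self _) hη2) hd.le
      have A := mul_le_mul_of_nonneg_left hgub hα.le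
      linarith [hb, A]
    · have hb : (1 - α * l) * (x - xstar) ≤ -(max |1 - α * l| |1 - α * s|) * (x - xstar) := by
        apply mul_le_mul_of_nonpos_right _ hd.le
        have := neg_abs_le (1 - α * l)
        linarith
      have A := mul_le_mul_of_nonneg_left hglb hα.le
      linarith [hb, A]
  · -- d = 0
    have hg0 : deriv f x = 0 := by
      rw [hd] at hg
      simp only [abs_zero, mul_zero] at hg
      exact abs_nonpos_iff.mp hg
    rw [hd, hg0]
    simp
  · -- d > 0 : s*d ≤ g ≤ l*d
    have habs : |x - xstar| = x - xstar := abs_of_pos hd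
    have hglb : s * (x - xstar) ≤ deriv f x := by nlinarith
    have hgub : deriv f x ≤ l * (x - xstar) := by
      have := le_abs_self (deriv f x)
      nlinarith
    rw [abs_le, habs]
    constructor
    · have hb : -(max |1 - α * l| |1 - α * s|) * (x - xstar) ≤ (1 - α * l) * (x - xstar) := by
        apply mul_le_mul_of_nonneg_right _ hd.le
        have := neg_abs_le (1 - α * l)
        linarith
      have A := mul_le_mul_of_nonneg_left hgub hα.le
      linarith [hb, A]
    · have hb : (1 - α * s) * (x - xstar) ≤ (max |1 - α * l| |1 - α * s|) * (x - xstar) :=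
        mul_le_mul_of_nonneg_right (le_trans (le_abs_self _) hη2) hd.le
      have A := mul_le_mul_of_nonneg_left hglb hα.le
      linarith [hb, A]
end
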